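/- Let d ≥ 1 and let W : ℝ^{d×d} → ℝ be differentiable on the open set GL⁺(d) and frame indifferent, i.e. W(QF) = W(F) for all Q ∈ SO(d) and all F ∈ GL⁺(d). Fix F ∈ GL⁺(d) and let S ∈ ℝ^{d×d} be the matrix representing the Fréchet derivative of W at F, i.e. the derivative of W at F applied to G ∈ ℝ^{d×d} equals S : G. Then for every Ḟ ∈ ℝ^{d×d} one has S : Ḟ = (1/2) (F⁻¹ S) : (Ḟᵀ F + Fᵀ Ḟ). -/

import Mathlib

/-!
Differentiating the frame indifference `W (exp (t A) F) = W F` at `t = 0`, for a skew matrix `A`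
(so that `exp (t A) ∈ SO(d)`), gives `trace (Sᵀ A F) = 0` for all skew `A`, i.e. `F Sᵀ` is
symmetric. Given this symmetry, both halves of `(F⁻¹ S) : (Ḟᵀ F + Fᵀ Ḟ)` reduce to `S : Ḟ`
by cycling the trace.
-/

attribute [local instance] Matrix.frobeniusNormedAddCommGroup Matrix.frobeniusNormedSpace

open Matrix

open NormedSpace

namespace Matrix

variable {n : Type*} [Fintype n]

theorem transpose_eq_of_trace_mul_skew_eq_zero {M : Matrix n n ℝ}
    (h : ∀ A : Matrix n n ℝ, Aᵀ = -A → trace (M * A) = 0) : Mᵀ = M := by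
  set B := M - Mᵀ with hB
  have hBskew : Bᵀ = -B := by rw [hB, transpose_sub, transpose_transpose, neg_sub]
  have hMB : trace (M * B) = 0 := h B hBskew
  have hMtB : trace (Mᵀ * B) = 0 := by
    rw [← trace_transpose, transpose_mul, transpose_transpose, trace_mul_comm, hBskew,
      Matrix.mul_neg, trace_neg, hMB, neg_zero]
  have hBB : trace (Bᴴ * B) = 0 := by
    rw [conjTranspose_eq_transpose_of_trivial, hB, transpose_sub, transpose_transpose,
      ← hB, Matrix.sub_mul, trace_sub, hMtB, hMB, sub_zero]
  exact (sub_eq_zero.mp (trace_conjTranspose_mul_self_eq_zero_iff.mp hBB)).symm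

variable [DecidableEq n]

theorem det_exp_pos (X : Matrix n n ℝ) : 0 < (exp X).det := by
  have hne : (exp X).det ≠ 0 := ((isUnit_iff_isUnit_det _).mp (isUnit_exp X)).ne_zero
  have hsq : exp X = exp ((1 / 2 : ℝ) • X) * exp ((1 / 2 : ℝ) • X) := by
    rw [← exp_add_of_commute _ _ (Commute.refl _), ← add_smul]
    norm_num
  rw [hsq, det_mul] at hne ⊢
  exact mul_self_pos.mpr (left_ne_zero_of_mul hne)

theorem transpose_exp_mul_exp_of_transpose_eq_neg {A : Matrix n n ℝ} (hA : Aᵀ = -A) :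
    (exp A)ᵀ * exp A = 1 := by
  rw [← exp_transpose, hA, exp_neg]
  exact nonsing_inv_mul _ ((isUnit_iff_isUnit_det _).mp (isUnit_exp A))

theorem det_exp_of_transpose_eq_neg {A : Matrix n n ℝ} (hA : Aᵀ = -A) : (exp A).det = 1 := by
  have h := congrArg det (transpose_exp_mul_exp_of_transpose_eq_neg hA)
  rw [det_mul, det_transpose, det_one] at h
  exact (mul_self_eq_one_iff.mp h).resolve_right fun hneg => by
    linarith [det_exp_pos A]

theorem hasDerivAt_exp_smul_mul (A F : Matrix n n ℝ) :
    HasDerivAt (fun t : ℝ => exp (t • A) * F) (A * F) 0 := by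
  let : NormedRing (Matrix n n ℝ) := frobeniusNormedRing
  let : NormedAlgebra ℝ (Matrix n n ℝ) := frobeniusNormedAlgebra
  have hexp : HasDerivAt (fun t : ℝ => exp (t • A)) (exp ((0 : ℝ) • A) * A) 0 :=
    hasDerivAt_exp_smul_const A 0
  exact (hexp.mul_const F).congr_deriv (by simp)

theorem hasFDerivAt_apply_skew_mul_eq_zero {W : Matrix n n ℝ → ℝ} {F : Matrix n n ℝ}
    (hW : ∀ Q : Matrix n n ℝ, Qᵀ * Q = 1 → Q.det = 1 → W (Q * F) = W F)
    {L : Matrix n n ℝ →L[ℝ] ℝ} (hL : HasFDerivAt W L F) {A : Matrix n n ℝ} (hA : Aᵀ = -A) :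
    L (A * F) = 0 := by
  have hconst : (fun t : ℝ => W (exp (t • A) * F)) = fun _ => W F := by
    funext t
    have hskew : (t • A)ᵀ = -(t • A) := by rw [transpose_smul, hA, smul_neg]
    exact hW _ (transpose_exp_mul_exp_of_transpose_eq_neg hskew)
      (det_exp_of_transpose_eq_neg hskew)
  have hderiv := hL.comp_hasDerivAt_of_eq 0 (hasDerivAt_exp_smul_mul A F) (by simp)
  rw [Function.comp_def, hconst] at hderiv
  exact hderiv.unique (hasDerivAt_const 0 (W F))

theorem trace_transpose_inv_mul_mul_transpose_self_mul {F : Matrix n n ℝ} (hF : IsUnit F.det)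
    (S G : Matrix n n ℝ) : trace ((F⁻¹ * S)ᵀ * (Fᵀ * G)) = trace (Sᵀ * G) := by
  rw [transpose_mul, Matrix.mul_assoc, ← Matrix.mul_assoc _ Fᵀ, ← transpose_mul,
    mul_nonsing_inv F hF, transpose_one, Matrix.one_mul]

theorem trace_transpose_inv_mul_mul_transpose_mul_self {F S : Matrix n n ℝ} (hF : IsUnit F.det)
    (hSF : S * Fᵀ = F * Sᵀ) (G : Matrix n n ℝ) :
    trace ((F⁻¹ * S)ᵀ * (Gᵀ * F)) = trace (Sᵀ * G) :=
  calc trace ((F⁻¹ * S)ᵀ * (Gᵀ * F)) = trace (Fᵀ * G * (F⁻¹ * S)) := by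
        rw [← trace_transpose, transpose_mul, transpose_mul, transpose_transpose,
          transpose_transpose]
    _ = trace (G * (F⁻¹ * (S * Fᵀ))) := by
        rw [trace_mul_cycle, trace_mul_comm]
        simp only [Matrix.mul_assoc]
    _ = trace (G * Sᵀ) := by rw [hSF, ← Matrix.mul_assoc F⁻¹, nonsing_inv_mul F hF, Matrix.one_mul]
    _ = trace (Sᵀ * G) := trace_mul_comm _ _

end Matrix

theorem frame_indifference_stress_pairing_general {d : ℕ}
    (W : Matrix (Fin d) (Fin d) ℝ → ℝ)
    (hWframe : ∀ Q F : Matrix (Fin d) (Fin d) ℝ,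
      Qᵀ * Q = 1 → Q.det = 1 → 0 < F.det → W (Q * F) = W F)
    (F S : Matrix (Fin d) (Fin d) ℝ) (hF : 0 < F.det)
    (L : Matrix (Fin d) (Fin d) ℝ →L[ℝ] ℝ)
    (hL : HasFDerivAt W L F)
    (hLS : ∀ G : Matrix (Fin d) (Fin d) ℝ, L G = Matrix.trace (Sᵀ * G)) :
    ∀ Fdot : Matrix (Fin d) (Fin d) ℝ,
      Matrix.trace (Sᵀ * Fdot) =
        (1 / 2) * Matrix.trace ((F⁻¹ * S)ᵀ * (Fdotᵀ * F + Fᵀ * Fdot)) := by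
  intro Fdot
  have hskew : ∀ A : Matrix (Fin d) (Fin d) ℝ, Aᵀ = -A → trace (F * Sᵀ * A) = 0 := by
    intro A hA
    rw [trace_mul_comm, ← Matrix.mul_assoc, trace_mul_comm, ← hLS]
    exact hasFDerivAt_apply_skew_mul_eq_zero (fun Q hQ hQdet => hWframe Q F hQ hQdet hF) hL hA
  have hsymm : S * Fᵀ = F * Sᵀ := by
    simpa using transpose_eq_of_trace_mul_skew_eq_zero hskew
  have hFunit : IsUnit F.det := hF.ne'.isUnit
  rw [Matrix.mul_add, trace_add, trace_transpose_inv_mul_mul_transpose_mul_self hFunit hsymm,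
    trace_transpose_inv_mul_mul_transpose_self_mul hFunit]
  ring

/-- If `W` is differentiable on `GL⁺(d)` and frame indifferent, and `S` represents
the Fréchet derivative of `W` at `F ∈ GL⁺(d)` with respect to the Frobenius inner
product `A : B = trace(Aᵀ B)`, then for every `Fdot` one has
`S : Fdot = (1/2) (F⁻¹ S) : (Fdotᵀ F + Fᵀ Fdot)`. -/
theorem frame_indifference_stress_pairing {d : ℕ} (hd : 1 ≤ d)
    (W : Matrix (Fin d) (Fin d) ℝ → ℝ)
    (hWdiff : DifferentiableOn ℝ W {F : Matrix (Fin d) (Fin d) ℝ | 0 < F.det})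
    (hWframe : ∀ Q F : Matrix (Fin d) (Fin d) ℝ,
      Qᵀ * Q = 1 → Q.det = 1 → 0 < F.det → W (Q * F) = W F)
    (F S : Matrix (Fin d) (Fin d) ℝ) (hF : 0 < F.det)
    (L : Matrix (Fin d) (Fin d) ℝ →L[ℝ] ℝ)
    (hL : HasFDerivAt W L F)
    (hLS : ∀ G : Matrix (Fin d) (Fin d) ℝ, L G = Matrix.trace (Sᵀ * G)) :
    ∀ Fdot : Matrix (Fin d) (Fin d) ℝ,
      Matrix.trace (Sᵀ * Fdot) =
        (1 / 2) * Matrix.trace ((F⁻¹ * S)ᵀ * (Fdotᵀ * F + Fᵀ * Fdot)) :=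
  frame_indifference_stress_pairing_general W hWframe F S hF L hL hLS
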